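/- For a doubly-connected graph G of order n ≥ 4, β(G) + β(Ḡ) = 2 if and only if G is isomorphic to the path P4 on 4 vertices. -/

import Mathlib

/-!
A single vertex `x` locates `G` exactly when `G` is connected and `v ↦ d(x, v)` is injective.
Then every vertex at distance `k + 1` from `x` has a neighbour at distance `k`, which by
injectivity is the unique vertex there, so `v ↦ d(x, v)` is an isomorphism onto a path with
endpoint `x`. Hence `β(G) + β(Ḡ) = 2` forces both `G` and `Ḡ` to be paths. Distances from a
locating vertex `y` of `Ḡ` change by exactly one along edges, so every vertex has `Ḡ`-degree at
most two, while the endpoint `x` has `G`-degree at most one; thus `n - 1 ≤ 3`, and `G ≅ P₄`.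
Conversely `P₄` is self-complementary and is located by an endpoint.
-/

open SimpleGraph

/-- `S` is a locating set of `G`: every vertex outside `S` is at finite distance from
some vertex of `S`, and any two distinct vertices have distinct vectors of distances
to `S`. -/
def IsLocatingSet {V : Type*} (G : SimpleGraph V) (S : Set V) : Prop :=
  (∀ v ∉ S, ∃ x ∈ S, G.edist v x ≠ ⊤) ∧
  ∀ u v : V, u ≠ v → ∃ x ∈ S, G.edist u x ≠ G.edist v x

/-- The location number (metric dimension) `β(G)`: the minimum cardinality of a
locating set of `G`. -/
noncomputable def locNum {V : Type*} [Fintype V] (G : SimpleGraph V) : ℕ :=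
  sInf {k | ∃ S : Set V, IsLocatingSet G S ∧ S.ncard = k}

namespace SimpleGraph

variable {V W : Type*} {G : SimpleGraph V} {H : SimpleGraph W}

lemma Hom.edist_le (f : G →g H) (u v : V) : H.edist (f u) (f v) ≤ G.edist u v := by
  rw [edist_eq_sInf, sInf_range]
  exact le_iInf fun p => (SimpleGraph.edist_le (p.map f)).trans_eq (by rw [Walk.length_map])

lemma Iso.edist_eq (e : G ≃g H) (u v : V) : H.edist (e u) (e v) = G.edist u v :=
  le_antisymm (Hom.edist_le e.toHom u v) (by simpa using Hom.edist_le e.symm.toHom (e u) (e v))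

def Iso.compl (e : G ≃g H) : Gᶜ ≃g Hᶜ where
  toEquiv := e.toEquiv
  map_rel_iff' := by simp [e.map_adj_iff]

lemma Reachable.exists_adj_dist_add_one_eq {u v : V} (h : G.Reachable u v) (hne : u ≠ v) :
    ∃ w, G.Adj w v ∧ G.dist u w + 1 = G.dist u v := by
  obtain ⟨p, hp⟩ := h.symm.exists_walk_length_eq_dist
  cases p with
  | nil => exact absurd rfl hne
  | @cons _ w _ hvw q =>
    refine ⟨w, hvw.symm, le_antisymm ?_ ?_⟩
    · have := dist_le q
      rw [Walk.length_cons] at hp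
      rw [dist_comm (u := u), dist_comm (u := u)]
      omega
    · have := hvw.symm.reachable.dist_triangle_right u
      rwa [dist_eq_one_iff_adj.mpr hvw.symm] at this

lemma pathGraph_val_le_val_add_length {n : ℕ} {i j : Fin n} (p : (pathGraph n).Walk i j) :
    j.val ≤ i.val + p.length := by
  induction p with
  | nil => simp
  | cons h _ ih =>
    rw [pathGraph_adj] at h
    rw [Walk.length_cons]
    omega

lemma pathGraph_dist_zero {n : ℕ} (i : Fin (n + 1)) : (pathGraph (n + 1)).dist 0 i = i := by
  have hconn := pathGraph_connected n
  refine le_antisymm ?_ ?_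
  · suffices ∀ k (hk : k < n + 1), (pathGraph (n + 1)).dist 0 ⟨k, hk⟩ ≤ k from this i i.2
    intro k hk
    induction k with
    | zero => simp
    | succ k ih =>
      have hadj : (pathGraph (n + 1)).Adj ⟨k, by omega⟩ ⟨k + 1, hk⟩ := by
        simp [pathGraph_adj]
      calc _ ≤ (pathGraph (n + 1)).dist 0 ⟨k, by omega⟩ + (pathGraph (n + 1)).dist _ _ :=
            hconn.dist_triangle
        _ ≤ k + 1 := by
          rw [dist_eq_one_iff_adj.mpr hadj]
          exact Nat.add_le_add_right (ih _) 1
  · obtain ⟨p, hp⟩ := hconn.exists_walk_length_eq_dist 0 i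
    simpa [← hp] using pathGraph_val_le_val_add_length p

-- The complement of the path `0 - 1 - 2 - 3` is the path `2 - 0 - 3 - 1`.
def pathGraphFourComplIso : (pathGraph 4)ᶜ ≃g pathGraph 4 where
  toEquiv := ⟨![1, 3, 0, 2], ![2, 0, 3, 1], by decide, by decide⟩
  map_rel_iff' {a b} := by
    simp only [compl_adj, pathGraph_adj]
    revert a b
    decide

end SimpleGraph

section LocatingSet

variable {V W : Type*} {G : SimpleGraph V} {H : SimpleGraph W}

lemma isLocatingSet_univ (G : SimpleGraph V) : IsLocatingSet G Set.univ :=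
  ⟨fun v hv => absurd (Set.mem_univ v) hv,
    fun u v huv => ⟨u, trivial, by rw [edist_self]; exact (edist_pos_of_ne huv.symm).ne⟩⟩

lemma IsLocatingSet.nonempty [Nonempty V] {S : Set V} (h : IsLocatingSet G S) : S.Nonempty := by
  obtain ⟨v⟩ := ‹Nonempty V›
  by_cases hv : v ∈ S
  · exact ⟨v, hv⟩
  · obtain ⟨x, hx, -⟩ := h.1 v hv
    exact ⟨x, hx⟩

lemma IsLocatingSet.preimage_iso (e : G ≃g H) {S : Set W} (h : IsLocatingSet H S) :
    IsLocatingSet G (e ⁻¹' S) := by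
  refine ⟨fun v hv => ?_, fun u v huv => ?_⟩
  · obtain ⟨y, hy, hfin⟩ := h.1 (e v) hv
    refine ⟨e.symm y, by simpa using hy, ?_⟩
    rwa [← e.edist_eq, e.apply_symm_apply]
  · obtain ⟨y, hy, hne⟩ := h.2 (e u) (e v) (e.injective.ne huv)
    refine ⟨e.symm y, by simpa using hy, ?_⟩
    rwa [← e.edist_eq, ← e.edist_eq, e.apply_symm_apply]

lemma isLocatingSet_singleton_iff {x : V} :
    IsLocatingSet G {x} ↔ G.Connected ∧ Function.Injective (G.dist x) := by
  constructor
  · intro h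
    have hreach (v : V) : G.Reachable x v := by
      by_cases hv : v = x
      · exact hv ▸ Reachable.rfl
      · obtain ⟨_, rfl, hfin⟩ := h.1 v hv
        exact (reachable_of_edist_ne_top hfin).symm
    refine ⟨(connected_iff_exists_forall_reachable G).mpr ⟨x, hreach⟩, fun u v huv => ?_⟩
    by_contra hne
    obtain ⟨_, rfl, hdist⟩ := h.2 u v hne
    rw [SimpleGraph.edist_comm, ← (hreach u).coe_dist_eq_edist, SimpleGraph.edist_comm,
      ← (hreach v).coe_dist_eq_edist, huv] at hdist
    exact hdist rfl
  · rintro ⟨hconn, hinj⟩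
    refine ⟨fun v _ => ⟨x, rfl, edist_ne_top_iff_reachable.mpr (hconn.preconnected v x)⟩,
      fun u v huv => ⟨x, rfl, ?_⟩⟩
    rw [SimpleGraph.edist_comm, ← (hconn.preconnected x u).coe_dist_eq_edist,
      SimpleGraph.edist_comm, ← (hconn.preconnected x v).coe_dist_eq_edist]
    exact_mod_cast hinj.ne huv

lemma isLocatingSet_pathGraph_zero (n : ℕ) : IsLocatingSet (pathGraph (n + 1)) {0} :=
  isLocatingSet_singleton_iff.mpr ⟨pathGraph_connected n, fun i j hij => by
    rw [pathGraph_dist_zero, pathGraph_dist_zero] at hij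
    exact Fin.ext hij⟩

variable {x : V}

lemma IsLocatingSet.degree_le_one_of_singleton (h : IsLocatingSet G {x})
    [Fintype (G.neighborSet x)] : G.degree x ≤ 1 := by
  have hinj := (isLocatingSet_singleton_iff.mp h).2
  refine Finset.card_le_one.mpr fun a ha b hb => hinj ?_
  rw [mem_neighborFinset] at ha hb
  rw [dist_eq_one_iff_adj.mpr ha, dist_eq_one_iff_adj.mpr hb]

lemma IsLocatingSet.degree_le_two_of_singleton (h : IsLocatingSet G {x}) (v : V)
    [Fintype (G.neighborSet v)] : G.degree v ≤ 2 := by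
  have hinj := (isLocatingSet_singleton_iff.mp h).2
  have hmaps : Set.MapsTo (G.dist x) (G.neighborFinset v)
      ({G.dist x v + 1, G.dist x v - 1} : Finset ℕ) := by
    intro w hw
    rw [Finset.mem_coe, mem_neighborFinset] at hw
    have := hw.diff_dist_adj (u := x)
    have := hinj.ne hw.ne.symm
    simp only [Finset.coe_insert, Finset.coe_singleton, Set.mem_insert_iff,
      Set.mem_singleton_iff]
    omega
  exact (Finset.card_le_card_of_injOn _ hmaps hinj.injOn).trans Finset.card_le_two

lemma card_le_four_of_isLocatingSet_singleton [Fintype V] {y : V} (hx : IsLocatingSet G {x})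
    (hy : IsLocatingSet Gᶜ {y}) : Fintype.card V ≤ 4 := by
  classical
  have hG := hx.degree_le_one_of_singleton
  have hGc := hy.degree_le_two_of_singleton x
  rw [degree_compl] at hGc
  omega

lemma IsLocatingSet.nonempty_iso_pathGraph_of_singleton [Fintype V] (h : IsLocatingSet G {x}) :
    Nonempty (G ≃g pathGraph (Fintype.card V)) := by
  obtain ⟨hconn, hinj⟩ := isLocatingSet_singleton_iff.mp h
  have hlt (v : V) : G.dist x v < Fintype.card V := by
    obtain ⟨p, hp, hlen⟩ := hconn.exists_path_of_dist x v
    exact hlen ▸ hp.length_lt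
  let φ : V → Fin (Fintype.card V) := fun v => ⟨G.dist x v, hlt v⟩
  have hφ : Function.Bijective φ := (Fintype.bijective_iff_injective_and_card φ).mpr
    ⟨fun a b hab => hinj (congrArg Fin.val hab), by simp⟩
  have hpred {u v : V} (huv : G.dist x u + 1 = G.dist x v) : G.Adj u v := by
    obtain ⟨w, hwv, hw⟩ := (hconn.preconnected x v).exists_adj_dist_add_one_eq
      (by rintro rfl; simp at huv)
    rwa [← hinj (Nat.add_right_cancel (hw.trans huv.symm))]
  refine ⟨⟨Equiv.ofBijective φ hφ, fun {a b} => ?_⟩⟩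
  simp only [Equiv.ofBijective_apply, pathGraph_adj, φ]
  refine ⟨fun hab => hab.elim hpred fun hba => (hpred hba).symm, fun hab => ?_⟩
  have := hab.diff_dist_adj (u := x)
  have := hinj.ne hab.ne.symm
  omega

variable [Fintype V] [Fintype W]

lemma exists_isLocatingSet_ncard_eq_locNum (G : SimpleGraph V) :
    ∃ S : Set V, IsLocatingSet G S ∧ S.ncard = locNum G :=
  Nat.sInf_mem (s := {k | ∃ S : Set V, IsLocatingSet G S ∧ S.ncard = k})
    ⟨_, Set.univ, isLocatingSet_univ G, rfl⟩

lemma locNum_le_ncard {S : Set V} (h : IsLocatingSet G S) : locNum G ≤ S.ncard :=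
  Nat.sInf_le ⟨S, h, rfl⟩

lemma one_le_locNum [Nonempty V] (G : SimpleGraph V) : 1 ≤ locNum G := by
  obtain ⟨S, hS, hcard⟩ := exists_isLocatingSet_ncard_eq_locNum G
  exact hcard ▸ (Set.ncard_pos S.toFinite).mpr hS.nonempty

lemma locNum_eq_one_iff : locNum G = 1 ↔ ∃ x, IsLocatingSet G {x} := by
  constructor
  · intro h
    obtain ⟨S, hS, hcard⟩ := exists_isLocatingSet_ncard_eq_locNum G
    obtain ⟨x, rfl⟩ := Set.ncard_eq_one.mp (hcard.trans h)
    exact ⟨x, hS⟩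
  · rintro ⟨x, hx⟩
    have : Nonempty V := ⟨x⟩
    exact le_antisymm ((locNum_le_ncard hx).trans_eq (Set.ncard_singleton x)) (one_le_locNum G)

lemma locNum_le_of_iso (e : G ≃g H) : locNum G ≤ locNum H := by
  obtain ⟨S, hS, hcard⟩ := exists_isLocatingSet_ncard_eq_locNum H
  calc locNum G ≤ (e ⁻¹' S).ncard := locNum_le_ncard (hS.preimage_iso e)
    _ = locNum H := by
      rw [Set.ncard_preimage_of_injective_subset_range e.injective (by simp), hcard]

lemma locNum_congr (e : G ≃g H) : locNum G = locNum H :=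
  le_antisymm (locNum_le_of_iso e) (locNum_le_of_iso e.symm)

lemma locNum_pathGraph (n : ℕ) : locNum (pathGraph (n + 1)) = 1 :=
  locNum_eq_one_iff.mpr ⟨0, isLocatingSet_pathGraph_zero n⟩

end LocatingSet

theorem locNum_sum_eq_two_iff_doubly_connected_general {V : Type*} [Fintype V]
    (G : SimpleGraph V) (hn : 4 ≤ Fintype.card V) :
    locNum G + locNum Gᶜ = 2 ↔ Nonempty (G ≃g pathGraph 4) := by
  have : Nonempty V := Fintype.card_pos_iff.mp (by omega)
  constructor
  · intro hsum
    have := one_le_locNum G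
    have := one_le_locNum Gᶜ
    obtain ⟨x, hx⟩ := locNum_eq_one_iff.mp (show locNum G = 1 by omega)
    obtain ⟨y, hy⟩ := locNum_eq_one_iff.mp (show locNum Gᶜ = 1 by omega)
    have hcard : Fintype.card V = 4 :=
      le_antisymm (card_le_four_of_isLocatingSet_singleton hx hy) hn
    exact hcard ▸ hx.nonempty_iso_pathGraph_of_singleton
  · rintro ⟨e⟩
    rw [locNum_congr e, locNum_congr (e.compl.trans pathGraphFourComplIso), locNum_pathGraph 3]

/-- For a doubly-connected graph `G` of order `n ≥ 4`, `β(G) + β(Ḡ) = 2` iff `G ≅ P₄`. -/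
theorem locNum_sum_eq_two_iff_doubly_connected {V : Type*} [Fintype V]
    (G : SimpleGraph V) (hn : 4 ≤ Fintype.card V) (hG : G.Connected)
    (hGc : Gᶜ.Connected) :
    locNum G + locNum Gᶜ = 2 ↔ Nonempty (G ≃g pathGraph 4) :=
  locNum_sum_eq_two_iff_doubly_connected_general G hn
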